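/- arXiv:1505.04949 — 6 statements merged into one kernel-verified Lean document; each statement's English description precedes it below -/
import Mathlib

section
/- Let X₁,...,Xₙ be i.i.d. real random variables distributed as X, Sₙ = X₁+⋯+Xₙ. Suppose there exist C > 0 and a non-decreasing sequence (bₙ) such that for all n, all x ≥ 0, and all y ≥ bₙ: P(|Sₙ| > x, |X₁| ≤ y,…,|Xₙ| ≤ y) ≤ C·exp(−x/y), and suppose supₙ n·P(|X| > bₙ) =: K < ∞. Then for the truncated sum Sₙ^{(y)} = Σₖ Xₖ·1_{|Xₖ| ≤ y}, one has P(|Sₙ^{(y)}| > x) ≤ C·e^K·exp(−x/y) for all n, all x ≥ 0, and all y ≥ bₙ. -/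
/-!
Split the event according to the set `A` of indices `k < n` with `|X k| > y`. On the piece
indexed by `A` the truncated sum is the plain sum over the other `n - #A` indices, all of which
are bounded by `y`. By independence and exchangeability that piece has probability
`P(|S_{n-#A}| > x, all |X_k| ≤ y) · P(|X| > y) ^ #A ≤ C e^{-x/y} p ^ #A`, where
`p = P(|X| > b n)` and `b (n - #A) ≤ b n ≤ y`. Summing over `A` gives
`C e^{-x/y} (1 + p) ^ n ≤ C e^{-x/y} e^{n p} ≤ C e^K e^{-x/y}`.
-/

open MeasureTheory ProbabilityTheory Filter

lemma Finset.sum_powerset_pow_card_le_exp {ι : Type*} (s : Finset ι) {p : ℝ} (hp : -1 ≤ p) :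
    ∑ A ∈ s.powerset, p ^ A.card ≤ Real.exp (s.card * p) := by
  have hsum : ∑ A ∈ s.powerset, p ^ A.card = (p + 1) ^ s.card := by
    simpa using Finset.sum_pow_mul_eq_add_pow p 1 s
  rw [hsum, Real.exp_nat_mul]
  exact pow_le_pow_left₀ (by linarith) (by linarith [Real.add_one_le_exp p]) _

lemma measurableSet_lt_abs_sum_and_forall_abs_le {κ : Type*} [Fintype κ] (x y : ℝ) :
    MeasurableSet {v : κ → ℝ | x < |∑ k, v k| ∧ ∀ k, |v k| ≤ y} := by
  simp only [Set.ofPred_and, Set.ofPred_forall]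
  exact (measurableSet_lt measurable_const (by fun_prop)).inter
    (MeasurableSet.iInter fun k => measurableSet_le (by fun_prop) measurable_const)

section Events

variable {Ω ι : Type*}

def boundedSumTail (X : ι → Ω → ℝ) (s : Finset ι) (x y : ℝ) : Set Ω :=
  {ω | x < |∑ k ∈ s, X k ω| ∧ ∀ k ∈ s, |X k ω| ≤ y}

def exceedAll (X : ι → Ω → ℝ) (A : Finset ι) (y : ℝ) : Set Ω :=
  ⋂ k ∈ A, {ω | y < |X k ω|}

lemma boundedSumTail_eq_preimage {κ : Type*} [Fintype κ] {X : ι → Ω → ℝ} {s : Finset ι}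
    (e : κ ≃ s) (x y : ℝ) :
    boundedSumTail X s x y =
      (fun ω k => X (e k) ω) ⁻¹' {v : κ → ℝ | x < |∑ k, v k| ∧ ∀ k, |v k| ≤ y} := by
  ext ω
  simp only [boundedSumTail, Set.mem_ofPred_eq, Set.mem_preimage, ← Finset.sum_coe_sort s,
    ← e.sum_comp]
  exact and_congr_right'
    ((e.forall_congr_right (q := fun k : s => |X k ω| ≤ y)).trans Subtype.forall).symm

lemma setOf_lt_abs_sum_ite_subset [DecidableEq ι] (X : ι → Ω → ℝ) (s : Finset ι) (x y : ℝ) :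
    {ω | x < |∑ k ∈ s, if |X k ω| ≤ y then X k ω else 0|} ⊆
      ⋃ A ∈ s.powerset, boundedSumTail X (s \ A) x y ∩ exceedAll X A y := by
  intro ω hω
  have hsA : s \ (s \ s.filter fun k => |X k ω| ≤ y) = s.filter fun k => |X k ω| ≤ y :=
    Finset.sdiff_sdiff_eq_self (Finset.filter_subset _ _)
  refine Set.mem_biUnion (x := s \ s.filter fun k => |X k ω| ≤ y)
    (Finset.mem_powerset.2 Finset.sdiff_subset) ⟨?_, ?_⟩
  · rw [boundedSumTail, hsA, Set.mem_ofPred_eq, Finset.sum_filter]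
    exact ⟨hω, fun k hk => (Finset.mem_filter.1 hk).2⟩
  · simp only [exceedAll, Set.mem_iInter, Set.mem_ofPred_eq, Finset.mem_sdiff,
      Finset.mem_filter]
    exact fun k hk => not_le.1 fun h => hk.2 ⟨hk.1, h⟩

end Events

section IID

variable {Ω ι : Type*} [MeasurableSpace Ω] {μ : Measure Ω}

theorem ProbabilityTheory.iIndepFun.map_comp_eq_of_injective {κ β : Type*} [Fintype κ]
    [MeasurableSpace β] {X : ι → Ω → β} (hiid : iIndepFun X μ)
    (hident : ∀ i j, IdentDistrib (X i) (X j) μ μ) {g g' : κ → ι} (hg : g.Injective)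
    (hg' : g'.Injective) :
    μ.map (fun ω k => X (g k) ω) = μ.map (fun ω k => X (g' k) ω) := by
  have hmeas : ∀ i, AEMeasurable (X i) μ := fun i => (hident i i).aemeasurable_fst
  rw [(hiid.precomp hg).map_fun_eq_pi_map fun k => hmeas _,
    (hiid.precomp hg').map_fun_eq_pi_map fun k => hmeas _]
  exact congrArg Measure.pi (funext fun k => (hident _ _).map_eq)

variable {X : ι → Ω → ℝ}

lemma measure_boundedSumTail_eq_of_card_eq (hiid : iIndepFun X μ)
    (hident : ∀ i j, IdentDistrib (X i) (X j) μ μ) {s t : Finset ι} (hst : s.card = t.card)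
    (x y : ℝ) :
    μ (boundedSumTail X s x y) = μ (boundedSumTail X t x y) := by
  let es : Fin s.card ≃ s := (Fintype.equivFinOfCardEq (Fintype.card_coe s)).symm
  let et : Fin s.card ≃ t :=
    (Fintype.equivFinOfCardEq ((Fintype.card_coe t).trans hst.symm)).symm
  have hS := measurableSet_lt_abs_sum_and_forall_abs_le (κ := Fin s.card) x y
  have hmeas (e : Fin s.card → ι) : AEMeasurable (fun ω k => X (e k) ω) μ :=
    aemeasurable_pi_lambda _ fun k => (hident (e k) (e k)).aemeasurable_fst
  rw [boundedSumTail_eq_preimage es, boundedSumTail_eq_preimage et,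
    ← Measure.map_apply_of_aemeasurable (hmeas _) hS,
    ← Measure.map_apply_of_aemeasurable (hmeas _) hS,
    hiid.map_comp_eq_of_injective hident (g := fun k => (es k : ι))
      (g' := fun k => (et k : ι)) (Subtype.val_injective.comp es.injective)
      (Subtype.val_injective.comp et.injective)]

lemma measure_boundedSumTail_inter_exceedAll (hiid : iIndepFun X μ)
    (hmeas : ∀ i, AEMeasurable (X i) μ) {s A : Finset ι} (hsA : Disjoint s A) (x y z : ℝ) :
    μ (boundedSumTail X s x y ∩ exceedAll X A z) =
      μ (boundedSumTail X s x y) * μ (exceedAll X A z) := by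
  have hA : exceedAll X A z = (fun ω (k : A) => X k ω) ⁻¹' ⋂ k, {v | z < |v k|} := by
    ext ω
    simp only [exceedAll, Set.mem_iInter, Set.mem_ofPred_eq, Set.mem_preimage, Subtype.forall]
  rw [boundedSumTail_eq_preimage (Equiv.refl s), hA]
  exact (hiid.indepFun_finset₀ s A hsA hmeas).measure_inter_preimage_eq_mul _ _
    (measurableSet_lt_abs_sum_and_forall_abs_le x y)
    (MeasurableSet.iInter fun k => measurableSet_lt measurable_const (by fun_prop))

lemma measure_exceedAll_eq_pow (hiid : iIndepFun X μ)
    (hident : ∀ i j, IdentDistrib (X i) (X j) μ μ) (A : Finset ι) (i₀ : ι) (z : ℝ) :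
    μ (exceedAll X A z) = μ {ω | z < |X i₀ ω|} ^ A.card := by
  have hz : MeasurableSet {t : ℝ | z < |t|} := measurableSet_lt measurable_const (by fun_prop)
  rw [exceedAll, hiid.meas_biInter (s := fun k => {ω | z < |X k ω|}) fun k _ => ⟨_, hz, rfl⟩,
    ← Finset.prod_const]
  exact Finset.prod_congr rfl fun k _ => (hident k i₀).measure_mem_eq hz

lemma measureReal_setOf_lt_abs_sum_ite_le [IsFiniteMeasure μ] [DecidableEq ι]
    (hiid : iIndepFun X μ) (hmeas : ∀ i, AEMeasurable (X i) μ) (s : Finset ι) (x y : ℝ) :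
    μ.real {ω | x < |∑ k ∈ s, if |X k ω| ≤ y then X k ω else 0|} ≤
      ∑ A ∈ s.powerset, μ.real (boundedSumTail X (s \ A) x y) * μ.real (exceedAll X A y) := by
  refine (measureReal_mono (setOf_lt_abs_sum_ite_subset X s x y) (measure_ne_top _ _)).trans
    ((measureReal_biUnion_finset_le _ _).trans_eq (Finset.sum_congr rfl fun A _ => ?_))
  simp only [measureReal_def, ENNReal.toReal_mul,
    measure_boundedSumTail_inter_exceedAll hiid hmeas Finset.sdiff_disjoint]

end IID

theorem stmt_1_general {Ω : Type*} [MeasurableSpace Ω] (μ : Measure Ω) [IsProbabilityMeasure μ]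
    (X : ℕ → Ω → ℝ)
    (hiid : iIndepFun X μ)
    (hident : ∀ i j, IdentDistrib (X i) (X j) μ μ)
    (b : ℕ → ℝ) (hb : Monotone b)
    (C K : ℝ)
    (hbound : ∀ (n : ℕ) (x y : ℝ), 0 ≤ x → b n ≤ y →
      (μ {ω | x < |∑ k ∈ Finset.range n, X k ω| ∧ ∀ k ∈ Finset.range n, |X k ω| ≤ y}).toReal
        ≤ C * Real.exp (-x / y))
    (hK : ∀ n : ℕ, (n : ℝ) * (μ {ω | b n < |X 0 ω|}).toReal ≤ K) :
    ∀ (n : ℕ) (x y : ℝ), 0 ≤ x → b n ≤ y →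
      (μ {ω | x < |∑ k ∈ Finset.range n, if |X k ω| ≤ y then X k ω else 0|}).toReal
        ≤ C * Real.exp K * Real.exp (-x / y) := by
  intro n x y hx hy
  set p := μ.real {ω | b n < |X 0 ω|}
  have hp : -1 ≤ p := by
    linarith [measureReal_nonneg (μ := μ) (s := {ω | b n < |X 0 ω|})]
  have hTail (A : Finset ℕ) :
      μ.real (boundedSumTail X (Finset.range n \ A) x y) ≤ C * Real.exp (-x / y) := by
    rw [measureReal_def,
      measure_boundedSumTail_eq_of_card_eq hiid hident (Finset.card_range _).symm]
    refine hbound _ x y hx ((hb ?_).trans hy)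
    exact (Finset.card_le_card Finset.sdiff_subset).trans (Finset.card_range n).le
  have hExceed (A : Finset ℕ) : μ.real (exceedAll X A y) ≤ p ^ A.card := by
    rw [measureReal_def, measure_exceedAll_eq_pow hiid hident A 0, ENNReal.toReal_pow]
    exact pow_le_pow_left₀ ENNReal.toReal_nonneg (measureReal_mono fun ω h => hy.trans_lt h) _
  have hCexp : 0 ≤ C * Real.exp (-x / y) :=
    measureReal_nonneg.trans (hTail ∅)
  have hmeas (i : ℕ) : AEMeasurable (X i) μ := (hident i i).aemeasurable_fst
  rw [← measureReal_def]
  calc μ.real {ω | x < |∑ k ∈ Finset.range n, if |X k ω| ≤ y then X k ω else 0|}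
      ≤ ∑ A ∈ (Finset.range n).powerset,
          μ.real (boundedSumTail X (Finset.range n \ A) x y) * μ.real (exceedAll X A y) :=
        measureReal_setOf_lt_abs_sum_ite_le hiid hmeas _ x y
    _ ≤ ∑ A ∈ (Finset.range n).powerset, C * Real.exp (-x / y) * p ^ A.card :=
        Finset.sum_le_sum fun A _ =>
          mul_le_mul (hTail A) (hExceed A) measureReal_nonneg hCexp
    _ ≤ C * Real.exp (-x / y) * Real.exp (n * p) := by
        rw [← Finset.mul_sum]
        refine mul_le_mul_of_nonneg_left ?_ hCexp
        simpa only [Finset.card_range] using (Finset.range n).sum_powerset_pow_card_le_exp hp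
    _ ≤ C * Real.exp (-x / y) * Real.exp K :=
        mul_le_mul_of_nonneg_left (Real.exp_le_exp.2 (hK n)) hCexp
    _ = C * Real.exp K * Real.exp (-x / y) := by ring

theorem stmt_1 {Ω : Type*} [MeasurableSpace Ω] (μ : Measure Ω) [IsProbabilityMeasure μ]
    (X : ℕ → Ω → ℝ) (hXmeas : ∀ i, Measurable (X i))
    (hiid : iIndepFun X μ)
    (hident : ∀ i j, IdentDistrib (X i) (X j) μ μ)
    (b : ℕ → ℝ) (hb : Monotone b)
    (C K : ℝ) (hC : 0 < C)
    (hbound : ∀ (n : ℕ) (x y : ℝ), 0 ≤ x → b n ≤ y →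
      (μ {ω | x < |∑ k ∈ Finset.range n, X k ω| ∧ ∀ k ∈ Finset.range n, |X k ω| ≤ y}).toReal
        ≤ C * Real.exp (-x / y))
    (hK : ∀ n : ℕ, (n : ℝ) * (μ {ω | b n < |X 0 ω|}).toReal ≤ K) :
    ∀ (n : ℕ) (x y : ℝ), 0 ≤ x → b n ≤ y →
      (μ {ω | x < |∑ k ∈ Finset.range n, if |X k ω| ≤ y then X k ω else 0|}).toReal
        ≤ C * Real.exp K * Real.exp (-x / y) :=
  stmt_1_general μ X hiid hident b hb C K hbound hK
end

section
/- Let Z be an offspring random variable in the domain of attraction of an α-stable law, α ∈ (1,2], with E[Z] = 1, so that κ_{Z−1}(t) = log E[e^{−t(Z−1)}] is regularly varying at 0 with index α: κ_{Z−1}(t) ∼ λ·t^α·ℓ(1/t)^{−α} for a slowly varying ℓ and λ > 0. Then the inverse function satisfies κ_{Z−1}^{−1}(t) ∼ t^{1/α}/(λ^{1/α}·L(1/t)) as t → 0, for a suitable slowly varying L, and consequently 1 − g_V(1−s) ∼ s^{1/α}/(λ^{1/α}·L(1/s)) as s → 0, where V is the total progeny. -/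
/-!
The hypothesis makes `κ` regularly varying at `0⁺` with index `α`, being asymptotic to
`λ t^α / ℓ(1/t)^α`. Since `κ (κinv s) = s`, the test `κ (b κinv s) / κ (κinv s) ≶ y` for `κ`
becomes `b ≶ κinv (y s) / κinv s`, so `κinv` is regularly varying with index `1/α`, and
`L x := x^{-1/α} / (λ^{1/α} κinv(1/x))` is then slowly varying; with this `L` the first
asymptotic is an identity. For the second, `1 - g_V(1-s) = 1 - exp(-κinv(-log(1-s)))`:
as `-log(1-s) ∼ s` and `κinv` is monotone and regularly varying, `κinv(-log(1-s)) ∼ κinv s`,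
and `1 - e^{-x} ∼ x`.
-/

open Filter

/-- `L` is slowly varying at `+∞`. -/
def SlowlyVaryingAtTop (L : ℝ → ℝ) : Prop :=
  ∀ y > (0 : ℝ), Tendsto (fun x => L (x * y) / L x) atTop (nhds 1)

open Topology Set

def RegularlyVaryingAtZero (f : ℝ → ℝ) (ρ : ℝ) : Prop :=
  ∀ r > (0 : ℝ), Tendsto (fun a => f (r * a) / f a) (𝓝[>] 0) (𝓝 (r ^ ρ))

lemma tendsto_const_mul_nhdsGT_zero {r : ℝ} (hr : 0 < r) :
    Tendsto (fun a => r * a) (𝓝[>] 0) (𝓝[>] 0) :=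
  tendsto_nhdsWithin_of_tendsto_nhds_of_eventually_within _
    (((continuous_const_mul r).tendsto' 0 0 (mul_zero r)).mono_left nhdsWithin_le_nhds)
    (eventually_nhdsWithin_of_forall fun _ ha => mul_pos hr ha)

lemma tendsto_div_self_nhdsGT_zero_of_hasDerivAt {f : ℝ → ℝ} {f' : ℝ} (hf : HasDerivAt f f' 0)
    (hf0 : f 0 = 0) : Tendsto (fun x => f x / x) (𝓝[>] 0) (𝓝 f') := by
  simpa [hf0, div_eq_inv_mul] using hf.tendsto_slope_zero_right

namespace RegularlyVaryingAtZero

lemma rpow (ρ : ℝ) : RegularlyVaryingAtZero (fun t => t ^ ρ) ρ := fun r hr =>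
  tendsto_const_nhds.congr' <| eventually_nhdsWithin_of_forall fun a (ha : 0 < a) => by
    show r ^ ρ = (r * a) ^ ρ / a ^ ρ
    rw [Real.mul_rpow hr.le ha.le, mul_div_cancel_right₀ _ (Real.rpow_pos_of_pos ha ρ).ne']

variable {f g : ℝ → ℝ} {ρ σ : ℝ}

lemma const_mul (hf : RegularlyVaryingAtZero f ρ) {c : ℝ} (hc : c ≠ 0) :
    RegularlyVaryingAtZero (fun t => c * f t) ρ := fun r hr =>
  (hf r hr).congr fun _ => (mul_div_mul_left _ _ hc).symm

lemma div (hf : RegularlyVaryingAtZero f ρ) (hg : RegularlyVaryingAtZero g σ) :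
    RegularlyVaryingAtZero (fun t => f t / g t) (ρ - σ) := fun r hr => by
  rw [Real.rpow_sub hr]
  exact ((hf r hr).div (hg r hr) (Real.rpow_pos_of_pos hr σ).ne').congr fun _ =>
    div_div_div_comm _ _ _ _

lemma rpow_const (hf : RegularlyVaryingAtZero f ρ) (hpos : ∀ t > 0, 0 < f t) (β : ℝ) :
    RegularlyVaryingAtZero (fun t => f t ^ β) (ρ * β) := fun r hr => by
  rw [Real.rpow_mul hr.le]
  refine ((hf r hr).rpow_const (Or.inl (Real.rpow_pos_of_pos hr ρ).ne')).congr' ?_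
  filter_upwards [self_mem_nhdsWithin] with a (ha : 0 < a)
  exact Real.div_rpow (hpos _ (mul_pos hr ha)).le (hpos a ha).le β

lemma congr_ratio (hg : RegularlyVaryingAtZero g ρ)
    (hfg : Tendsto (fun t => f t / g t) (𝓝[>] 0) (𝓝 1)) : RegularlyVaryingAtZero f ρ := by
  intro r hr
  have hfg_r := hfg.comp (tendsto_const_mul_nhdsGT_zero hr)
  have hg_ne : ∀ᶠ t in 𝓝[>] 0, g t ≠ 0 :=
    (hfg.eventually_ne one_ne_zero).mono fun t ht hgt => ht (by rw [hgt, div_zero])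
  have hlim := (hfg_r.mul (hg r hr)).div hfg one_ne_zero
  rw [one_mul, div_one] at hlim
  refine hlim.congr' ?_
  filter_upwards [hg_ne, (tendsto_const_mul_nhdsGT_zero hr).eventually hg_ne] with a ha hra
  simp only [Function.comp_apply, Pi.div_apply]
  rw [div_mul_div_cancel₀ hra, div_div_div_cancel_right₀ ha]

lemma slowlyVaryingAtTop_comp_inv (hf : RegularlyVaryingAtZero f 0) :
    SlowlyVaryingAtTop (fun x => f (1 / x)) := fun y hy => by
  simpa [Function.comp_def, mul_comm] using
    (hf y⁻¹ (inv_pos.2 hy)).comp tendsto_inv_atTop_nhdsGT_zero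

end RegularlyVaryingAtZero

lemma SlowlyVaryingAtTop.regularlyVaryingAtZero_comp_inv {ℓ : ℝ → ℝ} (hℓ : SlowlyVaryingAtTop ℓ) :
    RegularlyVaryingAtZero (fun t => ℓ (1 / t)) 0 := fun r hr => by
  simpa [Function.comp_def, mul_comm] using (hℓ r⁻¹ (inv_pos.2 hr)).comp tendsto_inv_nhdsGT_zero

namespace Set.RightInvOn

variable {f g : ℝ → ℝ}

lemma pos (hfg : RightInvOn g f (Ici 0)) (hg : MapsTo g (Ici 0) (Ici 0)) (hf0 : f 0 = 0)
    {s : ℝ} (hs : 0 < s) : 0 < g s := by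
  refine (hg hs.le).lt_of_ne fun h => hs.ne ?_
  rw [← hfg hs.le, ← h, hf0]

lemma monotoneOn (hfg : RightInvOn g f (Ici 0)) (hg : MapsTo g (Ici 0) (Ici 0))
    (hf : StrictMonoOn f (Ici 0)) : MonotoneOn g (Ici 0) := by
  intro s hs s' hs' hss'
  rwa [← hf.le_iff_le (hg hs) (hg hs'), hfg hs, hfg hs']

lemma tendsto_nhdsGT_zero (hfg : RightInvOn g f (Ici 0)) (hg : MapsTo g (Ici 0) (Ici 0))
    (hf : StrictMonoOn f (Ici 0)) (hf0 : f 0 = 0) : Tendsto g (𝓝[>] 0) (𝓝[>] 0) := by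
  refine tendsto_nhdsWithin_of_tendsto_nhds_of_eventually_within _ ?_
    (eventually_nhdsWithin_of_forall fun s hs => hfg.pos hg hf0 hs)
  refine tendsto_order.2 ⟨fun b hb => ?_, fun b hb => ?_⟩
  · filter_upwards [self_mem_nhdsWithin] with s (hs : 0 < s)
    exact hb.trans_le (hg hs.le)
  · have hfb : 0 < f b := by simpa [hf0] using hf self_mem_Ici hb.le hb
    filter_upwards [Ioo_mem_nhdsGT hfb] with s hs
    exact (hf.lt_iff_lt (hg hs.1.le) hb.le).1 (by rw [hfg hs.1.le]; exact hs.2)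

end Set.RightInvOn

lemma RegularlyVaryingAtZero.rightInvOn {f g : ℝ → ℝ} {α : ℝ}
    (hf : RegularlyVaryingAtZero f α) (hα : 0 < α) (hfg : RightInvOn g f (Ici 0))
    (hg : MapsTo g (Ici 0) (Ici 0)) (hmono : StrictMonoOn f (Ici 0)) (hf0 : f 0 = 0) :
    RegularlyVaryingAtZero g α⁻¹ := by
  intro y hy
  have hg0 := hfg.tendsto_nhdsGT_zero hg hmono hf0
  have hgpos : ∀ s > 0, 0 < g s := fun s hs => hfg.pos hg hf0 hs
  have hcmp : ∀ b > 0, ∀ s > 0, (f (b * g s) / f (g s) < y ↔ b < g (y * s) / g s) ∧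
      (y < f (b * g s) / f (g s) ↔ g (y * s) / g s < b) := by
    intro b hb s hs
    have hbgs : b * g s ∈ Ici 0 := (mul_pos hb (hgpos s hs)).le
    have hys : y * s ∈ Ici 0 := (mul_pos hy hs).le
    rw [hfg hs.le, div_lt_iff₀ hs, lt_div_iff₀ hs, lt_div_iff₀ (hgpos s hs),
      div_lt_iff₀ (hgpos s hs)]
    have hz0 := hg hys
    have hfz := hfg hys
    generalize g (y * s) = z at hz0 hfz ⊢
    rw [← hfz]
    exact ⟨hmono.lt_iff_lt hbgs hz0, hmono.lt_iff_lt hz0 hbgs⟩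
  refine tendsto_order.2 ⟨fun b hb => ?_, fun b hb => ?_⟩
  · rcases le_or_gt b 0 with hb0 | hb0
    · filter_upwards [self_mem_nhdsWithin] with s (hs : 0 < s)
      exact hb0.trans_lt (div_pos (hgpos _ (by positivity)) (hgpos s hs))
    · have hbα : b ^ α < y := (Real.lt_rpow_inv_iff_of_pos hb0.le hy.le hα).1 hb
      filter_upwards [self_mem_nhdsWithin, hg0.eventually ((hf b hb0).eventually_lt_const hbα)]
        with s hs hlt
      exact (hcmp b hb0 s hs).1.1 hlt
  · have hb0 : 0 < b := (Real.rpow_pos_of_pos hy _).trans hb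
    have hbα : y < b ^ α := (Real.rpow_inv_lt_iff_of_pos hy.le hb0.le hα).1 hb
    filter_upwards [self_mem_nhdsWithin, hg0.eventually ((hf b hb0).eventually_const_lt hbα)]
      with s hs hlt
    exact (hcmp b hb0 s hs).2.1 hlt

lemma RegularlyVaryingAtZero.exists_slowlyVaryingAtTop_eq {g : ℝ → ℝ} {ρ c : ℝ}
    (hg : RegularlyVaryingAtZero g ρ) (hgpos : ∀ t > 0, 0 < g t) (hc : 0 < c) :
    ∃ L : ℝ → ℝ, SlowlyVaryingAtTop L ∧ (∀ x > 0, 0 < L x) ∧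
      ∀ t > 0, t ^ ρ / (c * L (1 / t)) = g t := by
  have hL : RegularlyVaryingAtZero (fun t => t ^ ρ / (c * g t)) 0 := by
    simpa using (RegularlyVaryingAtZero.rpow ρ).div (hg.const_mul hc.ne')
  refine ⟨fun x => (1 / x) ^ ρ / (c * g (1 / x)), hL.slowlyVaryingAtTop_comp_inv,
    fun x hx => ?_, fun t ht => ?_⟩
  · have := hgpos (1 / x) (by positivity)
    positivity
  · have := Real.rpow_pos_of_pos ht ρ
    simp only [one_div_one_div]
    field_simp

lemma tendsto_one_sub_exp_neg_div : Tendsto (fun x => (1 - Real.exp (-x)) / x) (𝓝[>] 0) (𝓝 1) := by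
  have hd : HasDerivAt (fun x => 1 - Real.exp (-x)) 1 0 := by
    simpa using ((Real.hasDerivAt_exp (-0)).comp 0 (hasDerivAt_neg 0)).const_sub 1
  exact tendsto_div_self_nhdsGT_zero_of_hasDerivAt hd (by simp)

lemma tendsto_neg_log_one_sub_div : Tendsto (fun s => -Real.log (1 - s) / s) (𝓝[>] 0) (𝓝 1) := by
  have hd : HasDerivAt (fun s => -Real.log (1 - s)) 1 0 :=
    (((hasDerivAt_id (0 : ℝ)).const_sub 1).log (by norm_num)).neg.congr_deriv (by norm_num)
  exact tendsto_div_self_nhdsGT_zero_of_hasDerivAt hd (by simp)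

lemma RegularlyVaryingAtZero.tendsto_comp_div {g u : ℝ → ℝ} {ρ : ℝ}
    (hg : RegularlyVaryingAtZero g ρ) (hmono : MonotoneOn g (Ioi 0)) (hpos : ∀ t > 0, 0 < g t)
    (hu : Tendsto (fun s => u s / s) (𝓝[>] 0) (𝓝 1)) :
    Tendsto (fun s => g (u s) / g s) (𝓝[>] 0) (𝓝 1) := by
  have hcont : Tendsto (fun y : ℝ => y ^ ρ) (𝓝 1) (𝓝 1) := by
    simpa using (Real.continuousAt_rpow_const 1 ρ (Or.inl one_ne_zero)).tendsto
  refine tendsto_order.2 ⟨fun b hb => ?_, fun b hb => ?_⟩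
  · obtain ⟨y, hby, hy⟩ := (((hcont.mono_left nhdsWithin_le_nhds).eventually_const_lt hb).and
      (Ioo_mem_nhdsLT one_pos)).exists
    filter_upwards [self_mem_nhdsWithin, hu.eventually_const_lt hy.2,
      (hg y hy.1).eventually_const_lt hby] with s (hs : 0 < s) hus hgys
    have hys : y * s < u s := (lt_div_iff₀ hs).1 hus
    have hys0 : 0 < y * s := mul_pos hy.1 hs
    calc b < g (y * s) / g s := hgys
      _ ≤ g (u s) / g s :=
        div_le_div_of_nonneg_right (hmono hys0 (hys0.trans hys) hys.le) (hpos s hs).le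
  · obtain ⟨y, hby, hy⟩ := (((hcont.mono_left nhdsWithin_le_nhds).eventually_lt_const hb).and
      (Ioo_mem_nhdsGT one_lt_two)).exists
    filter_upwards [self_mem_nhdsWithin, hu.eventually_lt_const hy.1,
      hu.eventually_const_lt zero_lt_one, (hg y (one_pos.trans hy.1)).eventually_lt_const hby]
      with s (hs : 0 < s) hus hus0 hgys
    have hys : u s < y * s := (div_lt_iff₀ hs).1 hus
    have hu0 : 0 < u s := (div_pos_iff_of_pos_right hs).1 hus0
    calc g (u s) / g s ≤ g (y * s) / g s :=
        div_le_div_of_nonneg_right (hmono hu0 (hu0.trans hys) hys.le) (hpos s hs).le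
      _ < b := hgys

theorem tendsto_one_sub_apply_one_sub_div {gV g : ℝ → ℝ} {ρ : ℝ}
    (hg : RegularlyVaryingAtZero g ρ) (hmono : MonotoneOn g (Ioi 0)) (hpos : ∀ t > 0, 0 < g t)
    (hg0 : Tendsto g (𝓝[>] 0) (𝓝[>] 0))
    (hgV : ∀ t ≥ (0 : ℝ), gV (Real.exp (-t)) = Real.exp (-(g t))) :
    Tendsto (fun s => (1 - gV (1 - s)) / g s) (𝓝[>] 0) (𝓝 1) := by
  set u : ℝ → ℝ := fun s => -Real.log (1 - s) with hu_def
  have hu_pos : ∀ s ∈ Ioo (0 : ℝ) 1, 0 < u s := fun s hs =>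
    neg_pos.2 (Real.log_neg (by linarith [hs.2]) (by linarith [hs.1]))
  have hu : Tendsto u (𝓝[>] 0) (𝓝[>] 0) := by
    refine tendsto_nhdsWithin_of_tendsto_nhds_of_eventually_within _ ?_ ?_
    · have : ContinuousAt u 0 := ((continuousAt_const.sub continuousAt_id).log (by norm_num)).neg
      simpa [u] using this.tendsto.mono_left nhdsWithin_le_nhds
    · filter_upwards [Ioo_mem_nhdsGT one_pos] using hu_pos
  have hlim := (tendsto_one_sub_exp_neg_div.comp (hg0.comp hu)).mul
    (hg.tendsto_comp_div hmono hpos tendsto_neg_log_one_sub_div)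
  rw [one_mul] at hlim
  refine hlim.congr' ?_
  filter_upwards [Ioo_mem_nhdsGT one_pos] with s hs
  have hgV_s : gV (1 - s) = Real.exp (-g (u s)) := by
    rw [← hgV (u s) (hu_pos s hs).le, hu_def, neg_neg, Real.exp_log (by linarith [hs.2])]
  simp only [Function.comp_apply, hgV_s]
  rw [div_mul_div_cancel₀ (hpos _ (hu_pos s hs)).ne']

theorem stmt_10_general (κ κinv gV ℓ : ℝ → ℝ) (lam α : ℝ)
    (hα : 1 < α) (hlam : 0 < lam)
    (hℓ : SlowlyVaryingAtTop ℓ) (hℓpos : ∀ x > (0 : ℝ), 0 < ℓ x)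
    (hκasym : Tendsto (fun t => κ t / (lam * t ^ α / ℓ (1 / t) ^ α))
      (nhdsWithin 0 (Set.Ioi 0)) (nhds 1))
    (hmono : StrictMonoOn κ (Set.Ici 0)) (hκ0 : κ 0 = 0)
    (hinv : ∀ t ≥ (0 : ℝ), 0 ≤ κinv t ∧ κ (κinv t) = t ∧ κinv (κ t) = t)
    (hgv : ∀ t ≥ (0 : ℝ), gV (Real.exp (-t)) = Real.exp (-(κinv t))) :
    ∃ L : ℝ → ℝ, SlowlyVaryingAtTop L ∧ (∀ x > (0 : ℝ), 0 < L x) ∧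
      Tendsto (fun t => κinv t / (t ^ (1 / α) / (lam ^ (1 / α) * L (1 / t))))
        (nhdsWithin 0 (Set.Ioi 0)) (nhds 1) ∧
      Tendsto (fun s => (1 - gV (1 - s)) / (s ^ (1 / α) / (lam ^ (1 / α) * L (1 / s))))
        (nhdsWithin 0 (Set.Ioi 0)) (nhds 1) := by
  have hmodel : RegularlyVaryingAtZero (fun t => lam * t ^ α / ℓ (1 / t) ^ α) α := by
    simpa using ((RegularlyVaryingAtZero.rpow α).const_mul hlam.ne').div
      (hℓ.regularlyVaryingAtZero_comp_inv.rpow_const (fun t ht => hℓpos _ (one_div_pos.2 ht)) α)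
  have hmaps : MapsTo κinv (Ici 0) (Ici 0) := fun t ht => (hinv t ht).1
  have hright : RightInvOn κinv κ (Ici 0) := fun t ht => (hinv t ht).2.1
  have hκinv : RegularlyVaryingAtZero κinv (1 / α) := by
    rw [one_div]
    exact (hmodel.congr_ratio hκasym).rightInvOn (by linarith) hright hmaps hmono hκ0
  have hpos : ∀ t > 0, 0 < κinv t := fun t ht => hright.pos hmaps hκ0 ht
  obtain ⟨L, hL, hLpos, hκinv_eq⟩ :=
    hκinv.exists_slowlyVaryingAtTop_eq hpos (Real.rpow_pos_of_pos hlam _)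
  refine ⟨L, hL, hLpos, tendsto_const_nhds.congr' ?_,
    (tendsto_one_sub_apply_one_sub_div hκinv
      ((hright.monotoneOn hmaps hmono).mono Ioi_subset_Ici_self) hpos
      (hright.tendsto_nhdsGT_zero hmaps hmono hκ0) hgv).congr' ?_⟩
  all_goals filter_upwards [self_mem_nhdsWithin] with t (ht : 0 < t)
  · rw [hκinv_eq t ht, div_self (hpos t ht).ne']
  · rw [hκinv_eq t ht]

theorem stmt_10 (κ κinv gV ℓ : ℝ → ℝ) (lam α : ℝ)
    (hα : 1 < α) (hα2 : α ≤ 2) (hlam : 0 < lam)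
    (hℓ : SlowlyVaryingAtTop ℓ) (hℓpos : ∀ x > (0 : ℝ), 0 < ℓ x)
    (hκasym : Tendsto (fun t => κ t / (lam * t ^ α / ℓ (1 / t) ^ α))
      (nhdsWithin 0 (Set.Ioi 0)) (nhds 1))
    (hmono : StrictMonoOn κ (Set.Ici 0)) (hκ0 : κ 0 = 0)
    (hinv : ∀ t ≥ (0 : ℝ), 0 ≤ κinv t ∧ κ (κinv t) = t ∧ κinv (κ t) = t)
    (hgv : ∀ t ≥ (0 : ℝ), gV (Real.exp (-t)) = Real.exp (-(κinv t))) :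
    ∃ L : ℝ → ℝ, SlowlyVaryingAtTop L ∧ (∀ x > (0 : ℝ), 0 < L x) ∧
      Tendsto (fun t => κinv t / (t ^ (1 / α) / (lam ^ (1 / α) * L (1 / t))))
        (nhdsWithin 0 (Set.Ioi 0)) (nhds 1) ∧
      Tendsto (fun s => (1 - gV (1 - s)) / (s ^ (1 / α) / (lam ^ (1 / α) * L (1 / s))))
        (nhdsWithin 0 (Set.Ioi 0)) (nhds 1) :=
  stmt_10_general κ κinv gV ℓ lam α hα hlam hℓ hℓpos hκasym hmono hκ0 hinv hgv
end

section
/- Let V be the total progeny of a critical Galton–Watson process with offspring variance σ² < ∞. Then 1 − g_V(1−s) ∼ (√2/σ)·√s as s → 0. -/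
open MeasureTheory Filter


noncomputable def Saux (n : ℕ) (x : ℝ) : ℝ :=
  ∑ k ∈ Finset.range n, ∑ j ∈ Finset.range k, (1 - x) ^ j

lemma geom_aux (n : ℕ) (x : ℝ) :
    1 - (1 - x) ^ n = x * ∑ j ∈ Finset.range n, (1 - x) ^ j := by
  have := geom_sum_mul (1 - x) n
  nlinarith [this]

lemma SauxB (n : ℕ) (x : ℝ) :
    (n : ℝ) - x * Saux n x = ∑ j ∈ Finset.range n, (1 - x) ^ j := by
  induction n with
  | zero => simp [Saux]
  | succ n ih =>
    have hg := geom_aux n x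
    simp only [Saux, Finset.sum_range_succ] at ih ⊢
    push_cast
    linear_combination ih + hg

lemma SauxA (n : ℕ) (x : ℝ) :
    (1 - x) ^ n - 1 + n * x = x ^ 2 * Saux n x := by
  induction n with
  | zero => simp [Saux]
  | succ n ih =>
    have hb := SauxB n x
    simp only [Saux] at hb
    simp only [Saux, Finset.sum_range_succ] at ih ⊢
    push_cast
    linear_combination (1 - x) * ih + x ^ 2 * hb

lemma Saux_nonneg (n : ℕ) {x : ℝ} (hx : x ≤ 1) : 0 ≤ Saux n x := by
  apply Finset.sum_nonneg; intro k _
  apply Finset.sum_nonneg; intro j _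
  exact pow_nonneg (by linarith) j

lemma Saux_le (n : ℕ) {x : ℝ} (hx0 : 0 ≤ x) (hx : x ≤ 1) : Saux n x ≤ (n : ℝ) ^ 2 := by
  have h1 : Saux n x ≤ ∑ k ∈ Finset.range n, ∑ j ∈ Finset.range k, (1:ℝ) := by
    apply Finset.sum_le_sum; intro k _
    apply Finset.sum_le_sum; intro j _
    exact pow_le_one₀ (by linarith) (by linarith)
  calc Saux n x ≤ _ := h1
    _ ≤ (n:ℝ)^2 := by
        simp only [Finset.sum_const, Finset.card_range, nsmul_eq_mul, mul_one]
        calc ∑ k ∈ Finset.range n, (k:ℝ) ≤ ∑ k ∈ Finset.range n, (n:ℝ) := by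
              apply Finset.sum_le_sum; intro k hk
              exact_mod_cast (Finset.mem_range.mp hk).le
          _ = n * n := by simp [Finset.sum_const, mul_comm]
          _ = (n:ℝ)^2 := by ring

lemma Saux_zero (n : ℕ) : Saux n 0 = (n : ℝ) * ((n : ℝ) - 1) / 2 := by
  induction n with
  | zero => simp [Saux]
  | succ n ih =>
    simp only [Saux, Finset.sum_range_succ, sub_zero, one_pow, Finset.sum_const,
      Finset.card_range, nsmul_eq_mul, mul_one] at ih ⊢
    push_cast
    linarith [ih]

lemma Saux_continuous (n : ℕ) : Continuous (fun x => Saux n x) := by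
  unfold Saux
  exact continuous_finset_sum _ (fun k _ => continuous_finset_sum _
    (fun j _ => (continuous_const.sub continuous_id).pow j))

section helpers
variable {Ω : Type*} [MeasurableSpace Ω] {μ : Measure Ω}

lemma meas_natcomp {W : Ω → ℕ} (hW : Measurable W) (f : ℕ → ℝ) :
    Measurable fun ω => f (W ω) := measurable_from_top.comp hW

lemma int_pow [IsProbabilityMeasure μ] {W : Ω → ℕ} (hW : Measurable W)
    {t : ℝ} (h0 : 0 ≤ t) (h1 : t ≤ 1) :
    Integrable (fun ω => t ^ W ω) μ := by
  apply Integrable.mono' (integrable_const 1)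
    ((meas_natcomp hW fun n => t ^ n).aestronglyMeasurable)
  filter_upwards with ω
  rw [Real.norm_eq_abs, abs_of_nonneg (pow_nonneg h0 _)]
  exact pow_le_one₀ h0 h1

end helpers

/- STATEMENT 11: If `V` is the total progeny of a critical Galton–Watson process
(`E[Z] = 1`, offspring variance `σ² ∈ (0,∞)`, Good's formula `g_V(s) = s·g_Z(g_V(s))`
on `[0,1]`), then `1 − g_V(1−s) ∼ (√2/σ)·√s` as `s → 0⁺`, where `g_V(s) = E[s^V]`. -/
theorem stmt_11 {Ω : Type*} [MeasurableSpace Ω] (μ : Measure Ω) [IsProbabilityMeasure μ]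
    (Z : Ω → ℕ) (hZ : Measurable Z)
    (hint : Integrable (fun ω => (Z ω : ℝ)) μ)
    (hsq : Integrable (fun ω => ((Z ω : ℝ)) ^ 2) μ)
    (hcrit : ∫ ω, (Z ω : ℝ) ∂μ = 1)
    (σ : ℝ) (hσ : 0 < σ)
    (hvar : ∫ ω, ((Z ω : ℝ) - 1) ^ 2 ∂μ = σ ^ 2)
    (V : Ω → ℕ) (hV : Measurable V) (hVpos : ∀ ω, 1 ≤ V ω)
    (hgood : ∀ s : ℝ, 0 ≤ s → s ≤ 1 →
      ∫ ω, s ^ V ω ∂μ = s * ∫ ω, (∫ ω', s ^ V ω' ∂μ) ^ Z ω ∂μ) :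
    Tendsto (fun s : ℝ => (1 - ∫ ω, (1 - s) ^ V ω ∂μ) / (Real.sqrt 2 / σ * Real.sqrt s))
      (nhdsWithin 0 (Set.Ioi 0)) (nhds 1) := by
  set l := nhdsWithin (0:ℝ) (Set.Ioi 0) with hl
  have hsq1 : Integrable (fun ω => ((Z ω : ℝ) - 1)^2) μ := by
    have e : (fun ω => ((Z ω:ℝ)-1)^2) = fun ω => (Z ω:ℝ)^2 - (2*(Z ω:ℝ) - 1) := by
      funext ω; ring
    rw [e]; exact hsq.sub ((hint.const_mul 2).sub (integrable_const 1))
  have intS : ∀ x : ℝ, 0 ≤ x → x ≤ 1 → Integrable (fun ω => Saux (Z ω) x) μ := by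
    intro x h0 h1
    apply hsq.mono ((meas_natcomp hZ fun n => Saux n x).aestronglyMeasurable)
    filter_upwards with ω
    rw [Real.norm_eq_abs, Real.norm_eq_abs, abs_of_nonneg (Saux_nonneg _ (by linarith)),
      abs_of_nonneg (by positivity)]
    exact Saux_le _ h0 h1
  have psi0 : ∫ ω, Saux (Z ω) 0 ∂μ = σ^2/2 := by
    have e1 : ∀ ω, Saux (Z ω) 0 = (((Z ω:ℝ) - 1)^2)/2 + ((Z ω:ℝ) - 1)/2 := by
      intro ω; rw [Saux_zero]; ring
    have hZm1 : Integrable (fun ω => ((Z ω:ℝ) - 1)) μ := hint.sub (integrable_const 1)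
    have i1 : Integrable (fun ω => (((Z ω:ℝ)-1)^2)/2) μ := hsq1.div_const 2
    have i2 : Integrable (fun ω => ((Z ω:ℝ)-1)/2) μ := hZm1.div_const 2
    have h2 : ∫ ω, ((Z ω:ℝ) - 1) ∂μ = 0 := by
      rw [integral_sub hint (integrable_const 1), hcrit]; simp
    calc ∫ ω, Saux (Z ω) 0 ∂μ
        = ∫ ω, ((((Z ω:ℝ)-1)^2)/2 + ((Z ω:ℝ)-1)/2) ∂μ :=
          integral_congr_ae (.of_forall e1)
      _ = (∫ ω, ((Z ω:ℝ)-1)^2 ∂μ)/2 + (∫ ω, ((Z ω:ℝ)-1) ∂μ)/2 := by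
          rw [integral_add i1 i2, integral_div, integral_div]
      _ = σ^2/2 := by rw [hvar, h2]; ring
  have hIoo : Set.Ioo (0:ℝ) 1 ∈ l := Ioo_mem_nhdsGT_of_mem ⟨le_refl 0, one_pos⟩
  have hpsi : Tendsto (fun x => ∫ ω, Saux (Z ω) x ∂μ) l (nhds (σ^2/2)) := by
    rw [← psi0]
    apply tendsto_integral_filter_of_dominated_convergence (fun ω => (Z ω:ℝ)^2)
    · exact .of_forall fun x => ((meas_natcomp hZ fun n => Saux n x).aestronglyMeasurable)
    · filter_upwards [hIoo] with x hx
      filter_upwards with ω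
      rw [Real.norm_eq_abs, abs_of_nonneg (Saux_nonneg _ (by linarith [hx.2]))]
      exact Saux_le _ hx.1.le hx.2.le
    · exact hsq
    · filter_upwards with ω
      exact ((Saux_continuous (Z ω)).tendsto 0).mono_left nhdsWithin_le_nhds
  have hprob : ∫ (_ : Ω), (1:ℝ) ∂μ = 1 := by simp
  have hgt : Tendsto (fun s : ℝ => ∫ ω, (1-s) ^ V ω ∂μ) l (nhds 1) := by
    have key : Tendsto (fun s : ℝ => ∫ ω, (1-s) ^ V ω ∂μ) l (nhds (∫ (_ : Ω), (1:ℝ) ∂μ)) := by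
      apply tendsto_integral_filter_of_dominated_convergence (fun _ => (1:ℝ))
      · exact .of_forall fun s => ((meas_natcomp hV fun n => (1-s)^n).aestronglyMeasurable)
      · filter_upwards [hIoo] with s hs
        filter_upwards with ω
        rw [Real.norm_eq_abs, abs_of_nonneg (pow_nonneg (by linarith [hs.2]) _)]
        exact pow_le_one₀ (by linarith [hs.2]) (by linarith [hs.1])
      · exact integrable_const 1
      · filter_upwards with ω
        have hcont : Continuous (fun x : ℝ => (1 - x) ^ (V ω)) :=
          (continuous_sub_left (1:ℝ)).pow (V ω)
        have h := hcont.tendsto (0:ℝ)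
        simp only [sub_zero, one_pow] at h
        exact h.mono_left nhdsWithin_le_nhds
    rw [hprob] at key
    exact key
  have hg0 : ∀ s : ℝ, 0 ≤ s → s ≤ 1 → 0 ≤ ∫ ω, (1-s) ^ V ω ∂μ := fun s h0 h1 =>
    integral_nonneg fun ω => pow_nonneg (by linarith) _
  have hgle : ∀ s : ℝ, 0 ≤ s → s ≤ 1 → ∫ ω, (1-s) ^ V ω ∂μ ≤ 1 - s := by
    intro s h0 h1
    have hpt : ∀ ω, (1-s)^(V ω) ≤ 1 - s := by
      intro ω
      calc (1-s)^(V ω) ≤ (1-s)^1 :=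
            pow_le_pow_of_le_one (by linarith) (by linarith) (hVpos ω)
        _ = 1-s := pow_one _
    have h := integral_mono (int_pow hV (by linarith : (0:ℝ) ≤ 1-s) (by linarith))
      (integrable_const (1-s) : Integrable (fun _ : Ω => (1-s)) μ) hpt
    simpa using h
  have hu0 : Tendsto (fun s : ℝ => 1 - ∫ ω, (1-s)^V ω ∂μ) l (nhds 0) := by
    have h := tendsto_const_nhds (x := (1:ℝ)) (f := l) |>.sub hgt
    simpa using h
  have humem : Tendsto (fun s : ℝ => 1 - ∫ ω, (1-s)^V ω ∂μ) l l := by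
    rw [hl, tendsto_nhdsWithin_iff]
    constructor
    · exact hu0
    · filter_upwards [hIoo] with s hs
      have := hgle s hs.1.le hs.2.le
      simp only [Set.mem_Ioi]; linarith [hs.1]
  have hpsiu : Tendsto
      (fun s : ℝ => ∫ ω, Saux (Z ω) (1 - ∫ ω', (1-s)^V ω' ∂μ) ∂μ) l (nhds (σ^2/2)) :=
    hpsi.comp humem
  have hkey : ∀ s : ℝ, s ∈ Set.Ioo (0:ℝ) 1 →
      (1 - ∫ ω, (1-s)^V ω ∂μ)^2 * (∫ ω, Saux (Z ω) (1 - ∫ ω', (1-s)^V ω' ∂μ) ∂μ)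
        = s * (∫ ω, (1-s)^V ω ∂μ) / (1-s) := by
    intro s hs
    set t := ∫ ω, (1-s)^V ω ∂μ with ht
    have ht0 : 0 ≤ t := hg0 s hs.1.le hs.2.le
    have ht1 : t ≤ 1 - s := hgle s hs.1.le hs.2.le
    have hx0 : 0 ≤ 1 - t := by nlinarith [hs.1, hs.2]
    have hx1 : 1 - t ≤ 1 := by linarith
    have hgood' : t = (1-s) * ∫ ω, t ^ Z ω ∂μ :=
      hgood (1-s) (by linarith [hs.2]) (by linarith [hs.1])
    have hf : ∫ ω, t ^ Z ω ∂μ = t + (1-t)^2 * ∫ ω, Saux (Z ω) (1-t) ∂μ := by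
      have e : ∀ ω, t ^ Z ω = (1 - (1-t)*(Z ω:ℝ)) + (1-t)^2 * Saux (Z ω) (1-t) := by
        intro ω
        have hA := SauxA (Z ω) (1-t)
        have hb : (1 : ℝ) - (1-t) = t := by ring
        rw [hb] at hA
        linarith [hA]
      calc ∫ ω, t ^ Z ω ∂μ
          = ∫ ω, ((1 - (1-t)*(Z ω:ℝ)) + (1-t)^2 * Saux (Z ω) (1-t)) ∂μ :=
            integral_congr_ae (.of_forall e)
        _ = (∫ ω, (1 - (1-t)*(Z ω:ℝ)) ∂μ) + (1-t)^2 * ∫ ω, Saux (Z ω) (1-t) ∂μ := by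
            have j1 : Integrable (fun ω => (1:ℝ) - (1-t)*(Z ω:ℝ)) μ :=
              (integrable_const 1).sub (hint.const_mul (1-t))
            have j2 : Integrable (fun ω => (1-t)^2 * Saux (Z ω) (1-t)) μ :=
              (intS (1-t) hx0 hx1).const_mul ((1-t)^2)
            rw [integral_add j1 j2, integral_const_mul]
        _ = t + (1-t)^2 * ∫ ω, Saux (Z ω) (1-t) ∂μ := by
            have j3 : Integrable (fun ω => (1-t)*(Z ω:ℝ)) μ := hint.const_mul (1-t)
            rw [integral_sub (integrable_const 1) j3, integral_const_mul, hcrit, hprob]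
            ring_nf
    rw [hf] at hgood'
    have hs1 : (1:ℝ) - s ≠ 0 := by intro h; nlinarith [hs.2]
    field_simp
    linear_combination (-1 : ℝ) * hgood'
  have hone : Tendsto (fun s : ℝ => 1 - s) l (nhds 1) := by
    have h := (continuous_sub_left (1:ℝ)).tendsto 0
    simp only [sub_zero] at h
    exact h.mono_left nhdsWithin_le_nhds
  have hne : ∀ᶠ s in l, 0 < ∫ ω, Saux (Z ω) (1 - ∫ ω', (1-s)^V ω' ∂μ) ∂μ :=
    hpsiu.eventually (eventually_gt_nhds (by positivity))
  have h1 : Tendsto (fun s : ℝ => (1 - ∫ ω, (1-s)^V ω ∂μ)^2 / s) l (nhds (2/σ^2)) := by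
    have hq : Tendsto (fun s : ℝ => (∫ ω, (1-s)^V ω ∂μ) /
        ((1-s) * ∫ ω, Saux (Z ω) (1 - ∫ ω', (1-s)^V ω' ∂μ) ∂μ)) l
        (nhds (1 / (1 * (σ^2/2)))) :=
      hgt.div (hone.mul hpsiu) (by positivity)
    have hval : (1:ℝ) / (1 * (σ^2/2)) = 2/σ^2 := by field_simp
    rw [hval] at hq
    refine Filter.Tendsto.congr' ?_ hq
    filter_upwards [hIoo, hne] with s hs hψ
    have hk := hkey s hs
    have hs0 : s ≠ 0 := ne_of_gt hs.1
    have hs1 : (1:ℝ) - s ≠ 0 := by intro h; nlinarith [hs.2]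
    have hden : (0:ℝ) < (1-s) * ∫ ω, Saux (Z ω) (1 - ∫ ω', (1-s)^V ω' ∂μ) ∂μ := by
      have : (0:ℝ) < 1 - s := by linarith [hs.2]
      exact mul_pos this hψ
    rw [eq_div_iff hs1] at hk
    rw [div_eq_div_iff hden.ne' (ne_of_gt hs.1)]
    linear_combination (-1 : ℝ) * hk
  have h2 : Tendsto (fun s : ℝ => (1 - ∫ ω, (1-s)^V ω ∂μ) / Real.sqrt s) l
      (nhds (Real.sqrt 2 / σ)) := by
    have hsq2 : Real.sqrt (2/σ^2) = Real.sqrt 2 / σ := by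
      rw [Real.sqrt_div (by norm_num : (0:ℝ) ≤ 2), Real.sqrt_sq hσ.le]
    have h := (Real.continuous_sqrt.tendsto _).comp h1
    rw [hsq2] at h
    refine Filter.Tendsto.congr' ?_ h
    filter_upwards [hIoo] with s hs
    have hu : 0 ≤ 1 - ∫ ω, (1-s)^V ω ∂μ := by linarith [hgle s hs.1.le hs.2.le, hs.1]
    simp only [Function.comp]
    rw [Real.sqrt_div (sq_nonneg _), Real.sqrt_sq hu]
  have hne2 : Real.sqrt 2 / σ ≠ 0 := by positivity
  have h3 := h2.div_const (Real.sqrt 2 / σ)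
  rw [div_self hne2] at h3
  refine Filter.Tendsto.congr' ?_ h3
  filter_upwards with s
  rw [div_div, mul_comm]
end

section
/- Let Z be a critical offspring variable (E[Z]=1) whose log-Laplace transform κ_{Z−1}(t) is regularly varying at 0 with index α ∈ (1,2]. Then g_Z(s) = 1 − (1−s) + (1−s)^{α+o(1)} as s → 1, and consequently g_{B−A}(s) = 1 − (1−s)^{α−1+o(1)} as s → 1, where g_{B−A}(s) = (1−g_Z(s))/(1−s). -/
/-!
With `F(t) = E[e^{-t(Z-1)}]` and `κ = log F`, the substitution `s = e^{-t}` gives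
`g_Z(s) - s = s (e^{κ(t)} - 1) ~ κ(t)` and `t ~ 1 - s` as `s → 1`, so everything reduces to
`log κ(t) / log t → α` as `t → 0⁺`. Since `E[Z] = 1`, `F` is convex with `F ≥ 1 = F(0)` on
`[0, ∞)`, hence `κ` is positive and monotone there. For `h(x) = -log κ(e^{-x})` regular variation
says `h(x + 1) - h(x) → α`; a Cesàro average along the integers and monotone interpolation give
`h(x) / x → α`.
-/

open Filter Topology Real Set

theorem tendsto_div_natCast_of_tendsto_sub {u : ℕ → ℝ} {c : ℝ}
    (hu : Tendsto (fun k => u (k + 1) - u k) atTop (𝓝 c)) :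
    Tendsto (fun k : ℕ => u k / k) atTop (𝓝 c) := by
  have h := hu.cesaro.add (tendsto_const_div_atTop_nhds_zero_nat (u 0))
  rw [add_zero] at h
  refine h.congr' ?_
  filter_upwards [eventually_ne_atTop 0] with k hk
  rw [Finset.sum_range_sub (f := u)]
  field_simp
  ring

theorem Monotone.tendsto_div_atTop_of_tendsto_add_one_sub {h : ℝ → ℝ} (hh : Monotone h) {c : ℝ}
    (hc : Tendsto (fun x => h (x + 1) - h x) atTop (𝓝 c)) :
    Tendsto (fun x => h x / x) atTop (𝓝 c) := by
  have hseq : Tendsto (fun k : ℕ => h k / k) atTop (𝓝 c) :=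
    tendsto_div_natCast_of_tendsto_sub <|
      (hc.comp tendsto_natCast_atTop_atTop).congr fun k => by simp
  have hseq' : Tendsto (fun k : ℕ => h (k + 1 : ℕ) / (k + 1 : ℕ)) atTop (𝓝 c) :=
    hseq.comp (tendsto_add_atTop_nat 1)
  have hfloor : Tendsto (fun x : ℝ => (⌊x⌋₊ : ℝ) / x) atTop (𝓝 1) := tendsto_nat_floor_div_atTop
  have hfloor' : Tendsto (fun x : ℝ => ((⌊x⌋₊ + 1 : ℕ) : ℝ) / x) atTop (𝓝 1) := by
    simpa only [Nat.cast_succ, add_div, one_div, add_zero] using hfloor.add tendsto_inv_atTop_zero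
  have hlower := (hseq.comp tendsto_nat_floor_atTop).mul hfloor
  have hupper := (hseq'.comp tendsto_nat_floor_atTop).mul hfloor'
  rw [mul_one] at hlower hupper
  refine tendsto_of_tendsto_of_tendsto_of_le_of_le' hlower hupper ?_ ?_
  all_goals
    filter_upwards [eventually_ge_atTop 1] with x hx
    have hn : (0 : ℝ) < ⌊x⌋₊ := by exact_mod_cast Nat.floor_pos.2 hx
    simp only [Function.comp_apply]
  · rw [div_mul_div_cancel₀ hn.ne']
    exact div_le_div_of_nonneg_right (hh (Nat.floor_le (by linarith))) (by linarith)
  · rw [div_mul_div_cancel₀ (by positivity)]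
    refine div_le_div_of_nonneg_right (hh ?_) (by linarith)
    exact_mod_cast (Nat.lt_floor_add_one x).le

theorem tendsto_log_div_log_of_monotoneOn {f : ℝ → ℝ} {α : ℝ} (hpos : ∀ t > 0, 0 < f t)
    (hmono : MonotoneOn f (Ioi 0))
    (hrv : Tendsto (fun t => f (t * exp (-1)) / f t) (𝓝[>] 0) (𝓝 (exp (-1) ^ α))) :
    Tendsto (fun t => log (f t) / log t) (𝓝[>] 0) (𝓝 α) := by
  set h : ℝ → ℝ := fun x => -log (f (exp (-x)))
  have hh : Monotone h := fun x y hxy => neg_le_neg <| log_le_log (hpos _ (exp_pos _)) <|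
    hmono (exp_pos _) (exp_pos _) (exp_le_exp.2 (neg_le_neg hxy))
  have hexp : Tendsto (fun x => exp (-x)) atTop (𝓝[>] 0) :=
    tendsto_nhdsWithin_iff.2 ⟨tendsto_exp_neg_atTop_nhds_zero, .of_forall fun x => exp_pos _⟩
  have hstep : Tendsto (fun x => h (x + 1) - h x) atTop (𝓝 α) := by
    have hlim := ((continuousAt_log (rpow_pos_of_pos (exp_pos _) α).ne').tendsto.comp
      (hrv.comp hexp)).neg
    rw [log_rpow (exp_pos _), log_exp, mul_neg_one, neg_neg] at hlim
    refine hlim.congr fun x => ?_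
    simp only [Function.comp_apply, h, neg_add, exp_add]
    rw [log_div (hpos _ (by positivity)).ne' (hpos _ (exp_pos _)).ne']
    ring
  refine ((hh.tendsto_div_atTop_of_tendsto_add_one_sub hstep).comp
    (tendsto_neg_atBot_atTop.comp tendsto_log_nhdsGT_zero)).congr' ?_
  filter_upwards [self_mem_nhdsWithin] with t (ht : 0 < t)
  simp only [Function.comp_apply, h, neg_neg, exp_log ht, neg_div_neg_eq]

theorem tendsto_nhdsGT_zero_of_tendsto_log_div_log {f : ℝ → ℝ} {α : ℝ} (hα : 0 < α)
    (hpos : ∀ t > 0, 0 < f t) (hf : Tendsto (fun t => log (f t) / log t) (𝓝[>] 0) (𝓝 α)) :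
    Tendsto f (𝓝[>] 0) (𝓝[>] 0) := by
  have hlog : Tendsto (fun t => log (f t)) (𝓝[>] 0) atBot := by
    refine (hf.pos_mul_atBot hα tendsto_log_nhdsGT_zero).congr' ?_
    filter_upwards [tendsto_log_nhdsGT_zero.eventually_lt_atBot 0] with t ht
    exact div_mul_cancel₀ _ ht.ne
  refine (tendsto_exp_atBot_nhdsGT.comp hlog).congr' ?_
  filter_upwards [self_mem_nhdsWithin] with t (ht : 0 < t)
  exact exp_log (hpos t ht)

theorem tendsto_log_div_log_of_tendsto_div {β : Type*} {l : Filter β} {u v : β → ℝ}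
    (hv : Tendsto v l (𝓝[>] 0)) (huv : Tendsto (fun x => u x / v x) l (𝓝 1)) :
    Tendsto (fun x => log (u x) / log (v x)) l (𝓝 1) := by
  have hlogv : Tendsto (fun x => log (v x)) l atBot := tendsto_log_nhdsGT_zero.comp hv
  have h := tendsto_const_nhds (x := (1 : ℝ)).add
    (((continuousAt_log one_ne_zero).tendsto.comp huv).div_atBot hlogv)
  rw [add_zero] at h
  refine h.congr' ?_
  filter_upwards [huv.eventually_ne one_ne_zero, hv self_mem_nhdsWithin,
    hlogv.eventually_lt_atBot 0] with x huvx (hvx : 0 < v x) hlogvx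
  rw [Function.comp_apply, log_div (div_ne_zero_iff.1 huvx).1 hvx.ne', sub_div,
    div_self hlogvx.ne]
  ring

theorem tendsto_exp_sub_one_div_nhdsNE_zero :
    Tendsto (fun x => (exp x - 1) / x) (𝓝[≠] 0) (𝓝 1) := by
  simpa [div_eq_inv_mul] using (hasDerivAt_exp 0).tendsto_slope_zero

theorem tendsto_neg_log_div_one_sub_nhdsNE_one :
    Tendsto (fun s => -log s / (1 - s)) (𝓝[≠] 1) (𝓝 1) := by
  have h := (hasDerivAt_log one_ne_zero).tendsto_slope
  rw [inv_one] at h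
  refine h.congr fun s => ?_
  rw [slope_def_field, log_one, sub_zero, ← neg_div_neg_eq, neg_sub]

theorem tendsto_log_sub_self_div_log_one_sub {g κ : ℝ → ℝ} {α : ℝ} (hα : 0 < α)
    (hκpos : ∀ t > 0, 0 < κ t) (hκ : Tendsto (fun t => log (κ t) / log t) (𝓝[>] 0) (𝓝 α))
    (hg : ∀ s ∈ Ioo (0 : ℝ) 1, g s - s = s * (exp (κ (-log s)) - 1)) :
    Tendsto (fun s => log (g s - s) / log (1 - s)) (𝓝[Ioo 0 1] 1) (𝓝 α) := by
  have hs : Tendsto (fun s : ℝ => s) (𝓝[Ioo 0 1] 1) (𝓝[≠] 1) :=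
    tendsto_nhdsWithin_mono_left (fun s hs => hs.2.ne) tendsto_id
  have ht : Tendsto (fun s => -log s) (𝓝[Ioo 0 1] 1) (𝓝[>] 0) := by
    refine tendsto_nhdsWithin_iff.2 ⟨?_, eventually_nhdsWithin_of_forall fun s hs =>
      neg_pos.2 (log_neg hs.1 hs.2)⟩
    have h := ((continuousAt_log one_ne_zero).tendsto).neg
    rw [log_one, neg_zero] at h
    exact h.mono_left nhdsWithin_le_nhds
  have hu : Tendsto (fun s : ℝ => 1 - s) (𝓝[Ioo 0 1] 1) (𝓝[>] 0) := by
    refine tendsto_nhdsWithin_iff.2 ⟨?_, eventually_nhdsWithin_of_forall fun s hs =>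
      sub_pos.2 hs.2⟩
    have h := (tendsto_const_nhds (x := (1 : ℝ))).sub (tendsto_id (x := 𝓝 (1 : ℝ)))
    rw [sub_self] at h
    exact h.mono_left nhdsWithin_le_nhds
  have hK : Tendsto (fun s => κ (-log s)) (𝓝[Ioo 0 1] 1) (𝓝[>] 0) :=
    (tendsto_nhdsGT_zero_of_tendsto_log_div_log hα hκpos hκ).comp ht
  have hgK : Tendsto (fun s => log (g s - s) / log (κ (-log s))) (𝓝[Ioo 0 1] 1) (𝓝 1) := by
    refine tendsto_log_div_log_of_tendsto_div hK ?_
    have h := (hs.mono_right nhdsWithin_le_nhds).mul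
      (tendsto_exp_sub_one_div_nhdsNE_zero.comp (hK.mono_right (nhdsGT_le_nhdsNE 0)))
    rw [one_mul] at h
    refine h.congr' ?_
    filter_upwards [self_mem_nhdsWithin] with s hs
    rw [hg s hs, Function.comp_apply, mul_div_assoc]
  have htu : Tendsto (fun s => log (-log s) / log (1 - s)) (𝓝[Ioo 0 1] 1) (𝓝 1) :=
    tendsto_log_div_log_of_tendsto_div hu (tendsto_neg_log_div_one_sub_nhdsNE_one.comp hs)
  have h := (hgK.mul (hκ.comp ht)).mul htu
  rw [one_mul, mul_one] at h
  refine h.congr' ?_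
  filter_upwards [hK (Ioo_mem_nhdsGT one_pos), ht (Ioo_mem_nhdsGT one_pos)] with s hKs hts
  have hlogK := (log_neg hKs.1 hKs.2).ne
  have hlogt := (log_neg hts.1 hts.2).ne
  simp only [Function.comp_apply]
  field_simp

theorem tendsto_log_one_sub_div_log_one_sub_of_tendsto {g : ℝ → ℝ} {α : ℝ}
    (hg : ∀ s ∈ Ioo (0 : ℝ) 1, s < g s)
    (h : Tendsto (fun s => log (g s - s) / log (1 - s)) (𝓝[Ioo 0 1] 1) (𝓝 α)) :
    Tendsto (fun s => log (1 - (1 - g s) / (1 - s)) / log (1 - s)) (𝓝[Ioo 0 1] 1)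
      (𝓝 (α - 1)) := by
  refine (h.sub_const 1).congr' ?_
  filter_upwards [self_mem_nhdsWithin] with s hs
  have h1s : 0 < 1 - s := sub_pos.2 hs.2
  have hlog : log (1 - s) ≠ 0 := (log_neg h1s (by linarith [hs.1])).ne
  rw [one_sub_div h1s.ne', sub_sub_sub_cancel_left, log_div (sub_pos.2 (hg s hs)).ne' h1s.ne',
    sub_div, div_self hlog]

theorem summable_of_tsum_ne_zero {β M : Type*} [AddCommMonoid M] [TopologicalSpace M]
    {f : β → M} (h : ∑' n, f n ≠ 0) : Summable f :=
  not_not.1 fun hf => h (tsum_eq_zero_of_not_summable hf)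

/-- `E[e^{-t(Z-1)}]` for `Z` with law `p`, so that `κ_{Z-1} = log ∘ shiftedLaplace p`. -/
noncomputable def shiftedLaplace (p : ℕ → ℝ) (t : ℝ) : ℝ :=
  ∑' n : ℕ, p n * exp (-t * ((n : ℝ) - 1))

section ShiftedLaplace

variable {p : ℕ → ℝ}

theorem mul_shiftedLaplace_neg_log {s : ℝ} (hs : 0 < s) :
    s * shiftedLaplace p (-log s) = ∑' n : ℕ, p n * s ^ n := by
  rw [shiftedLaplace, ← tsum_mul_left]
  congr 1 with n
  rw [neg_neg, mul_sub, mul_one, exp_sub, mul_comm (log s), exp_nat_mul, exp_log hs]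
  field_simp

theorem shiftedLaplace_eq_one_of_forall_ne_one (hsum : ∑' n, p n = 1)
    (hdeg : ∀ n ≠ 1, p n = 0) (t : ℝ) : shiftedLaplace p t = 1 := by
  have hp1 : p 1 = 1 := (tsum_eq_single 1 hdeg).symm.trans hsum
  rw [shiftedLaplace, tsum_eq_single 1 fun n hn => by rw [hdeg n hn, zero_mul]]
  simp [hp1]

theorem summable_shiftedLaplace (hp : ∀ n, 0 ≤ p n) (hsum : ∑' n, p n = 1) {t : ℝ} (ht : 0 ≤ t) :
    Summable fun n : ℕ => p n * exp (-t * ((n : ℝ) - 1)) := by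
  refine Summable.of_nonneg_of_le (fun n => mul_nonneg (hp n) (exp_pos _).le) (fun n => ?_)
    ((summable_of_tsum_ne_zero (hsum ▸ one_ne_zero)).mul_right (exp t))
  refine mul_le_mul_of_nonneg_left (exp_le_exp.2 ?_) (hp n)
  nlinarith [(n.cast_nonneg : (0 : ℝ) ≤ n)]

-- The tangent line of `exp` at `0` averages to exactly `1`: this is where `E[Z] = 1` enters.
theorem hasSum_mul_linearization (hsum : ∑' n, p n = 1) (hmean : ∑' n : ℕ, (n : ℝ) * p n = 1)
    (t : ℝ) : HasSum (fun n : ℕ => p n * (-t * ((n : ℝ) - 1) + 1)) 1 := by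
  have h := ((summable_of_tsum_ne_zero (hsum ▸ one_ne_zero)).hasSum.mul_left (1 + t)).sub
    ((summable_of_tsum_ne_zero (hmean ▸ one_ne_zero)).hasSum.mul_left t)
  have hlin : ∀ n : ℕ, (1 + t) * p n - t * (n * p n) = p n * (-t * ((n : ℝ) - 1) + 1) :=
    fun n => by ring
  rwa [hsum, hmean, mul_one, mul_one, add_sub_cancel_right, funext hlin] at h

theorem one_le_shiftedLaplace (hp : ∀ n, 0 ≤ p n) (hsum : ∑' n, p n = 1)
    (hmean : ∑' n : ℕ, (n : ℝ) * p n = 1) {t : ℝ} (ht : 0 ≤ t) : 1 ≤ shiftedLaplace p t :=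
  hasSum_le (fun n => mul_le_mul_of_nonneg_left (add_one_le_exp _) (hp n))
    (hasSum_mul_linearization hsum hmean t) (summable_shiftedLaplace hp hsum ht).hasSum

theorem one_lt_shiftedLaplace (hp : ∀ n, 0 ≤ p n) (hsum : ∑' n, p n = 1)
    (hmean : ∑' n : ℕ, (n : ℝ) * p n = 1) {m : ℕ} (hm : m ≠ 1) (hpm : p m ≠ 0) {t : ℝ}
    (ht : 0 < t) : 1 < shiftedLaplace p t := by
  have hexp : -t * ((m : ℝ) - 1) + 1 < exp (-t * ((m : ℝ) - 1)) :=
    add_one_lt_exp (mul_ne_zero (neg_ne_zero.2 ht.ne') (sub_ne_zero.2 (by exact_mod_cast hm)))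
  refine hasSum_lt (f := fun n : ℕ => p n * (-t * ((n : ℝ) - 1) + 1)) (i := m) (fun n => ?_)
    (mul_lt_mul_of_pos_left hexp ((hp m).lt_of_ne' hpm))
    (hasSum_mul_linearization hsum hmean t) (summable_shiftedLaplace hp hsum ht.le).hasSum
  exact mul_le_mul_of_nonneg_left (add_one_le_exp _) (hp n)

theorem shiftedLaplace_mul_le (hp : ∀ n, 0 ≤ p n) (hsum : ∑' n, p n = 1) {θ u : ℝ}
    (hθ₀ : 0 ≤ θ) (hθ₁ : θ ≤ 1) (hu : 0 ≤ u) :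
    shiftedLaplace p (θ * u) ≤ 1 - θ + θ * shiftedLaplace p u := by
  have h := ((summable_of_tsum_ne_zero (hsum ▸ one_ne_zero)).hasSum.mul_left (1 - θ)).add
    ((summable_shiftedLaplace hp hsum hu).hasSum.mul_left θ)
  rw [hsum, mul_one] at h
  refine hasSum_le (fun n => ?_) (summable_shiftedLaplace hp hsum (mul_nonneg hθ₀ hu)).hasSum h
  have hconv := convexOn_exp.2 (mem_univ 0) (mem_univ (-u * ((n : ℝ) - 1)))
    (sub_nonneg.2 hθ₁) hθ₀ (sub_add_cancel 1 θ)
  simp only [smul_eq_mul, mul_zero, zero_add, exp_zero, mul_one] at hconv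
  calc p n * exp (-(θ * u) * ((n : ℝ) - 1)) = p n * exp (θ * (-u * ((n : ℝ) - 1))) := by ring_nf
    _ ≤ p n * (1 - θ + θ * exp (-u * ((n : ℝ) - 1))) := mul_le_mul_of_nonneg_left hconv (hp n)
    _ = _ := by ring

theorem monotoneOn_shiftedLaplace (hp : ∀ n, 0 ≤ p n) (hsum : ∑' n, p n = 1)
    (hmean : ∑' n : ℕ, (n : ℝ) * p n = 1) : MonotoneOn (shiftedLaplace p) (Ici 0) := by
  intro t (ht : 0 ≤ t) u (hu : 0 ≤ u) htu
  rcases hu.eq_or_lt with rfl | hu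
  · rw [le_antisymm htu ht]
  have h := shiftedLaplace_mul_le hp hsum (div_nonneg ht hu.le) (div_le_one_of_le₀ htu hu.le) hu.le
  rw [div_mul_cancel₀ t hu.ne'] at h
  nlinarith [one_le_shiftedLaplace hp hsum hmean hu.le, div_le_one_of_le₀ htu hu.le]

end ShiftedLaplace

theorem stmt_13_general (p : ℕ → ℝ) (hp : ∀ n, 0 ≤ p n)
    (hsum : ∑' n : ℕ, p n = 1)
    (hmean : ∑' n : ℕ, (n : ℝ) * p n = 1)
    (gZ κ : ℝ → ℝ)
    (hgZ : ∀ s : ℝ, gZ s = ∑' n : ℕ, p n * s ^ n)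
    (hκ : ∀ t : ℝ, κ t = Real.log (∑' n : ℕ, p n * Real.exp (-t * ((n : ℝ) - 1))))
    (α : ℝ) (hα : 1 < α)
    (hrv : ∀ y > (0 : ℝ), Tendsto (fun t => κ (t * y) / κ t)
      (nhdsWithin 0 (Set.Ioi 0)) (nhds (y ^ α))) :
    Tendsto (fun s => Real.log (gZ s - s) / Real.log (1 - s))
        (nhdsWithin 1 (Set.Ioo 0 1)) (nhds α) ∧
    Tendsto (fun s => Real.log (1 - (1 - gZ s) / (1 - s)) / Real.log (1 - s))
        (nhdsWithin 1 (Set.Ioo 0 1)) (nhds (α - 1)) := by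
  have hκ' : ∀ t, κ t = log (shiftedLaplace p t) := hκ
  have hrv₁ := hrv (exp (-1)) (exp_pos _)
  obtain ⟨m, hm, hpm⟩ : ∃ m ≠ 1, p m ≠ 0 := by
    by_contra! hdeg
    have hκ₀ : ∀ t, κ t = 0 := fun t => by
      rw [hκ', shiftedLaplace_eq_one_of_forall_ne_one hsum hdeg, log_one]
    simp only [hκ₀, div_zero] at hrv₁
    exact (rpow_pos_of_pos (exp_pos _) α).ne (tendsto_nhds_unique tendsto_const_nhds hrv₁)
  have hκpos : ∀ t > 0, 0 < κ t := fun t ht => by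
    rw [hκ']
    exact log_pos (one_lt_shiftedLaplace hp hsum hmean hm hpm ht)
  have hκmono : MonotoneOn κ (Ioi 0) := fun t (ht : 0 < t) u (hu : 0 < u) htu => by
    rw [hκ', hκ']
    exact log_le_log (one_pos.trans_le (one_le_shiftedLaplace hp hsum hmean ht.le))
      (monotoneOn_shiftedLaplace hp hsum hmean ht.le hu.le htu)
  have hg : ∀ s ∈ Ioo (0 : ℝ) 1, gZ s - s = s * (exp (κ (-log s)) - 1) := fun s hs => by
    have hF := one_le_shiftedLaplace hp hsum hmean (neg_nonneg.2 (log_nonpos hs.1.le hs.2.le))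
    rw [hκ', exp_log (one_pos.trans_le hF), mul_sub, mul_one, mul_shiftedLaplace_neg_log hs.1,
      hgZ]
  have hlim := tendsto_log_sub_self_div_log_one_sub (by linarith) hκpos
    (tendsto_log_div_log_of_monotoneOn hκpos hκmono hrv₁) hg
  refine ⟨hlim, tendsto_log_one_sub_div_log_one_sub_of_tendsto (fun s hs => ?_) hlim⟩
  have hexp : 1 < exp (κ (-log s)) := one_lt_exp_iff.2 (hκpos _ (neg_pos.2 (log_neg hs.1 hs.2)))
  nlinarith [hg s hs, hs.1]

theorem stmt_13 (p : ℕ → ℝ) (hp : ∀ n, 0 ≤ p n)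
    (hsum : ∑' n : ℕ, p n = 1)
    (hmean : ∑' n : ℕ, (n : ℝ) * p n = 1)
    (gZ κ : ℝ → ℝ)
    (hgZ : ∀ s : ℝ, gZ s = ∑' n : ℕ, p n * s ^ n)
    (hκ : ∀ t : ℝ, κ t = Real.log (∑' n : ℕ, p n * Real.exp (-t * ((n : ℝ) - 1))))
    (α : ℝ) (hα : 1 < α) (hα2 : α ≤ 2)
    (hrv : ∀ y > (0 : ℝ), Tendsto (fun t => κ (t * y) / κ t)
      (nhdsWithin 0 (Set.Ioi 0)) (nhds (y ^ α))) :
    Tendsto (fun s => Real.log (gZ s - s) / Real.log (1 - s))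
        (nhdsWithin 1 (Set.Ioo 0 1)) (nhds α) ∧
    Tendsto (fun s => Real.log (1 - (1 - gZ s) / (1 - s)) / Real.log (1 - s))
        (nhdsWithin 1 (Set.Ioo 0 1)) (nhds (α - 1)) :=
  stmt_13_general p hp hsum hmean gZ κ hgZ hκ α hα hrv
end

section
/- Suppose for a random tree with height H and vertex count V the bound P(V ≤ n, H ≥ k) ≤ exp(−k·n^{−1/D + o(1)}) holds as n → ∞ (uniformly, i.e., for every δ>0, for large n, P(V ≤ n, H ≥ k) ≤ exp(−k·n^{−1/D−δ}) for all k). Then for every ε > 0 there exists η > 0 such that P(H > V^{1/D + ε}, V ≥ n) ≤ exp(−n^η) for all sufficiently large n. -/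
/-!
Split the event according to the value `m ≥ n` of `V`. On `{V = m, H > m^{1/D+ε}}` we have
`V ≤ m` and `H ≥ ⌈m^{1/D+ε}⌉`, so the hypothesis with `δ = ε/2` bounds its probability by
`exp(-m^{1/D+ε} · m^{-1/D-ε/2}) = exp(-m^{ε/2})`. The tail `∑_{m ≥ n} exp(-m^{ε/2})` is at most
`exp(-n^{ε/2}/2) · ∑_j exp(-j^{ε/2}/2)`, which is below `exp(-n^{ε/4})` for large `n`.
-/

open MeasureTheory Filter Real

lemma summable_exp_neg_mul_rpow {c α : ℝ} (hc : 0 < c) (hα : 0 < α) :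
    Summable fun m : ℕ => exp (-c * (m : ℝ) ^ α) := by
  have h := ((isLittleO_exp_neg_mul_rpow_atTop hc (-(2 / α))).comp_tendsto
    (tendsto_rpow_atTop hα)).comp_tendsto tendsto_natCast_atTop_atTop
  refine summable_of_isBigO_nat (summable_nat_rpow.2 (by norm_num : (-2 : ℝ) < -1))
    (h.isBigO.congr_right fun m => ?_)
  rw [Function.comp_apply, Function.comp_apply, ← rpow_mul m.cast_nonneg, mul_neg,
    mul_div_cancel₀ _ hα.ne']

lemma tendsto_rpow_div_two_sub_rpow_half_atTop {α : ℝ} (hα : 0 < α) :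
    Tendsto (fun x : ℝ => x ^ α / 2 - x ^ (α / 2)) atTop atTop := by
  have hy := tendsto_rpow_atTop (half_pos hα)
  have h : Tendsto (fun x : ℝ => x ^ (α / 2) * (x ^ (α / 2) / 2 - 1)) atTop atTop :=
    hy.atTop_mul_atTop₀ (tendsto_atTop_add_const_right _ _ (hy.atTop_div_const two_pos))
  refine h.congr' ((eventually_ge_atTop 0).mono fun x hx => ?_)
  rw [mul_sub, mul_one, ← mul_div_assoc, ← rpow_add' hx (by linarith), add_halves]

lemma tsum_exp_neg_rpow_nat_add_le {α : ℝ} (hα : 0 < α) :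
    ∀ᶠ n : ℕ in atTop, ∑' j : ℕ, exp (-((n + j : ℕ) : ℝ) ^ α) ≤ exp (-(n : ℝ) ^ (α / 2)) := by
  have hS := summable_exp_neg_mul_rpow (by norm_num : (0 : ℝ) < 1 / 2) hα
  have hgrow := (tendsto_exp_atTop.comp (tendsto_rpow_div_two_sub_rpow_half_atTop hα)).comp
    tendsto_natCast_atTop_atTop
  filter_upwards [hgrow.eventually_ge_atTop (∑' j : ℕ, exp (-(1 / 2) * (j : ℝ) ^ α))] with n hn
  have hterm : ∀ j : ℕ, exp (-((n + j : ℕ) : ℝ) ^ α) ≤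
      exp (-(n : ℝ) ^ α / 2) * exp (-(1 / 2) * (j : ℝ) ^ α) := fun j => by
    have hn : (n : ℝ) ^ α ≤ ((n + j : ℕ) : ℝ) ^ α := by gcongr; omega
    have hj : (j : ℝ) ^ α ≤ ((n + j : ℕ) : ℝ) ^ α := by gcongr; omega
    rw [← exp_add]
    gcongr
    linarith
  have hdom := hS.mul_left (exp (-(n : ℝ) ^ α / 2))
  calc ∑' j : ℕ, exp (-((n + j : ℕ) : ℝ) ^ α)
      ≤ ∑' j : ℕ, exp (-(n : ℝ) ^ α / 2) * exp (-(1 / 2) * (j : ℝ) ^ α) :=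
        (hdom.of_nonneg_of_le (fun _ => (exp_pos _).le) hterm).tsum_le_tsum hterm hdom
    _ = exp (-(n : ℝ) ^ α / 2) * ∑' j : ℕ, exp (-(1 / 2) * (j : ℝ) ^ α) := tsum_mul_left
    _ ≤ exp (-(n : ℝ) ^ α / 2) * exp ((n : ℝ) ^ α / 2 - (n : ℝ) ^ (α / 2)) := by gcongr; exact hn
    _ = exp (-(n : ℝ) ^ (α / 2)) := by rw [← exp_add]; ring_nf

lemma toReal_measure_le_tsum_of_fiber_le {Ω : Type*} [MeasurableSpace Ω] (μ : Measure Ω)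
    (V : Ω → ℕ) (p : Ω → Prop) (n : ℕ) {f : ℕ → ℝ} (hf0 : ∀ m, 0 ≤ f m) (hf : Summable f)
    (h : ∀ m ≥ n, μ {ω | p ω ∧ V ω = m} ≤ ENNReal.ofReal (f m)) :
    (μ {ω | p ω ∧ n ≤ V ω}).toReal ≤ ∑' j : ℕ, f (n + j) := by
  have hshift : Summable fun j => f (n + j) := hf.comp_injective (add_right_injective n)
  refine ENNReal.toReal_le_of_le_ofReal (tsum_nonneg fun _ => hf0 _) ?_
  calc μ {ω | p ω ∧ n ≤ V ω} ≤ μ (⋃ j : ℕ, {ω | p ω ∧ V ω = n + j}) :=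
        measure_mono fun ω ⟨hp, hn⟩ => Set.mem_iUnion.2 ⟨V ω - n, hp, by omega⟩
    _ ≤ ∑' j : ℕ, μ {ω | p ω ∧ V ω = n + j} := measure_iUnion_le _
    _ ≤ ∑' j : ℕ, ENNReal.ofReal (f (n + j)) := ENNReal.tsum_le_tsum fun j => h _ (by omega)
    _ = ENNReal.ofReal (∑' j : ℕ, f (n + j)) :=
        (ENNReal.ofReal_tsum_of_nonneg (fun _ => hf0 _) hshift).symm

lemma measure_rpow_lt_and_eq_le {Ω : Type*} [MeasurableSpace Ω] (μ : Measure Ω)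
    [IsFiniteMeasure μ] (V H : Ω → ℕ) {a b : ℝ} {m : ℕ} (hm : 0 < m)
    (h : ∀ k : ℕ, (μ {ω | V ω ≤ m ∧ k ≤ H ω}).toReal ≤ exp (-(k : ℝ) * (m : ℝ) ^ b)) :
    μ {ω | (V ω : ℝ) ^ a < H ω ∧ V ω = m} ≤ ENNReal.ofReal (exp (-(m : ℝ) ^ (a + b))) := by
  set k := ⌈(m : ℝ) ^ a⌉₊
  calc μ {ω | (V ω : ℝ) ^ a < H ω ∧ V ω = m} ≤ μ {ω | V ω ≤ m ∧ k ≤ H ω} :=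
        measure_mono fun ω ⟨hH, hV⟩ => ⟨hV.le, Nat.ceil_le.2 (hV ▸ hH.le)⟩
    _ ≤ ENNReal.ofReal (exp (-(k : ℝ) * (m : ℝ) ^ b)) :=
        (ENNReal.le_ofReal_iff_toReal_le (measure_ne_top _ _) (exp_pos _).le).2 (h k)
    _ ≤ ENNReal.ofReal (exp (-(m : ℝ) ^ (a + b))) := by
        rw [rpow_add (by exact_mod_cast hm), ← neg_mul]
        gcongr
        exact Nat.le_ceil _

theorem stmt_15_general {Ω : Type*} [MeasurableSpace Ω] (μ : Measure Ω) [IsProbabilityMeasure μ]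
    (V H : Ω → ℕ)
    (D : ℝ)
    (hbound : ∀ δ > (0 : ℝ), ∃ N : ℕ, ∀ n ≥ N, ∀ k : ℕ,
      (μ {ω | V ω ≤ n ∧ k ≤ H ω}).toReal ≤
        Real.exp (-(k : ℝ) * (n : ℝ) ^ (-(1 / D) - δ))) :
    ∀ ε > (0 : ℝ), ∃ η > (0 : ℝ), ∃ N : ℕ, ∀ n ≥ N,
      (μ {ω | (V ω : ℝ) ^ (1 / D + ε) < (H ω : ℝ) ∧ n ≤ V ω}).toReal ≤
        Real.exp (-(n : ℝ) ^ η) := by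
  intro ε hε
  obtain ⟨N₀, hN₀⟩ := hbound (ε / 2) (half_pos hε)
  obtain ⟨N, hN⟩ := eventually_atTop.1 ((tsum_exp_neg_rpow_nat_add_le (half_pos hε)).and
    (eventually_ge_atTop (max N₀ 1)))
  refine ⟨ε / 2 / 2, by positivity, N, fun n hn => ?_⟩
  obtain ⟨htail, hnN₀⟩ := hN n hn
  have hfiber : ∀ m ≥ n, μ {ω | (V ω : ℝ) ^ (1 / D + ε) < H ω ∧ V ω = m} ≤
      ENNReal.ofReal (exp (-(m : ℝ) ^ (ε / 2))) := fun m hm => by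
    have h := measure_rpow_lt_and_eq_le μ V H (a := 1 / D + ε) (by omega) (hN₀ m (by omega))
    rwa [show 1 / D + ε + (-(1 / D) - ε / 2) = ε / 2 by ring] at h
  calc _ ≤ ∑' j : ℕ, exp (-((n + j : ℕ) : ℝ) ^ (ε / 2)) :=
        toReal_measure_le_tsum_of_fiber_le μ V _ n (fun _ => (exp_pos _).le)
          (by simpa using summable_exp_neg_mul_rpow one_pos (half_pos hε)) hfiber
    _ ≤ _ := htail

theorem stmt_15 {Ω : Type*} [MeasurableSpace Ω] (μ : Measure Ω) [IsProbabilityMeasure μ]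
    (V H : Ω → ℕ) (hV : Measurable V) (hH : Measurable H)
    (D : ℝ) (hD : 1 < D)
    (hbound : ∀ δ > (0 : ℝ), ∃ N : ℕ, ∀ n ≥ N, ∀ k : ℕ,
      (μ {ω | V ω ≤ n ∧ k ≤ H ω}).toReal ≤
        Real.exp (-(k : ℝ) * (n : ℝ) ^ (-(1 / D) - δ))) :
    ∀ ε > (0 : ℝ), ∃ η > (0 : ℝ), ∃ N : ℕ, ∀ n ≥ N,
      (μ {ω | (V ω : ℝ) ^ (1 / D + ε) < (H ω : ℝ) ∧ n ≤ V ω}).toReal ≤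
        Real.exp (-(n : ℝ) ^ η) :=
  stmt_15_general μ V H D hbound
end

section
/- (Theorem 2, reduction step) Let S*, X* be random variables with X* ≤ S* + Δ and S* ≤ X* + Δ where Δ ≥ 0 (i.e., |S* − X*| ≤ Δ), and suppose P(X* > x) is regularly varying at ∞ with negative index and P(Δ > δ(x)·x) = o(P(X* > x)) for some δ(x) → 0. Then P(S* > x) ∼ P(X* > x) as x → ∞. -/
open MeasureTheory Filter Topology

/-! On the event `Δ ≤ δ(x) x` the coupling `|S* - X*| ≤ Δ` gives
`{X* > (1 + η) x} ⊆ {S* > x} ⊆ {X* > (1 - η) x}` as soon as `δ(x) ≤ η`, so up to the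
negligible probability `P(Δ > δ(x) x)` the ratio `P(S* > x) / P(X* > x)` is squeezed between
`P(X* > (1 ± η) x) / P(X* > x) → (1 ± η)^ρ`. Letting `η → 0` both bounds tend to `1`. -/

theorem tendsto_of_eventually_between_family {ι α β : Type*} [TopologicalSpace β] [LinearOrder β]
    [OrderTopology β] {p : Filter ι} [p.NeBot] {f : Filter α} {r : α → β} {c : β}
    {l u : ι → α → β} {a b : ι → β} (ha : Tendsto a p (𝓝 c)) (hb : Tendsto b p (𝓝 c))
    (hl : ∀ᶠ η in p, Tendsto (l η) f (𝓝 (a η))) (hu : ∀ᶠ η in p, Tendsto (u η) f (𝓝 (b η)))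
    (hlr : ∀ᶠ η in p, ∀ᶠ x in f, l η x ≤ r x ∧ r x ≤ u η x) :
    Tendsto r f (𝓝 c) := by
  refine tendsto_order.2 ⟨fun c' hc' => ?_, fun c' hc' => ?_⟩
  · obtain ⟨η, hη, hlη, hbetween⟩ :=
      ((ha.eventually (lt_mem_nhds hc')).and (hl.and hlr)).exists
    filter_upwards [hlη.eventually (lt_mem_nhds hη), hbetween] with x hx hx'
    exact hx.trans_le hx'.1
  · obtain ⟨η, hη, huη, hbetween⟩ :=
      ((hb.eventually (gt_mem_nhds hc')).and (hu.and hlr)).exists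
    filter_upwards [huη.eventually (gt_mem_nhds hη), hbetween] with x hx hx'
    exact hx'.2.trans_lt hx

theorem measureReal_lt_le_add_of_le_add {Ω : Type*} [MeasurableSpace Ω] {μ : Measure Ω}
    [IsFiniteMeasure μ] {S X Δ : Ω → ℝ} (hSX : ∀ ω, S ω ≤ X ω + Δ ω) {a a' t : ℝ}
    (ha : a' + t ≤ a) :
    μ.real {ω | a < S ω} ≤ μ.real {ω | a' < X ω} + μ.real {ω | t < Δ ω} := by
  have hsub : {ω | a < S ω} ⊆ {ω | a' < X ω} ∪ {ω | t < Δ ω} := by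
    intro ω (hω : a < S ω)
    by_cases hΔω : t < Δ ω
    · exact Or.inr hΔω
    · exact Or.inl (show a' < X ω by linarith [hSX ω, not_lt.1 hΔω])
  exact (measureReal_mono hsub).trans (measureReal_union_le _ _)

theorem measureReal_tail_sandwich {Ω : Type*} [MeasurableSpace Ω] {μ : Measure Ω}
    [IsFiniteMeasure μ] {S X Δ : Ω → ℝ} (habs : ∀ ω, |S ω - X ω| ≤ Δ ω) {x η d : ℝ}
    (hx : 0 ≤ x) (hd : d ≤ η) :
    μ.real {ω | x * (1 + η) < X ω} ≤ μ.real {ω | x < S ω} + μ.real {ω | d * x < Δ ω} ∧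
      μ.real {ω | x < S ω} ≤ μ.real {ω | x * (1 - η) < X ω} + μ.real {ω | d * x < Δ ω} :=
  ⟨measureReal_lt_le_add_of_le_add (fun ω => by linarith [(abs_sub_le_iff.1 (habs ω)).2])
      (by nlinarith),
    measureReal_lt_le_add_of_le_add (fun ω => by linarith [(abs_sub_le_iff.1 (habs ω)).1])
      (by nlinarith)⟩

theorem tendsto_one_add_mul_rpow_nhdsGT_zero (s ρ : ℝ) :
    Tendsto (fun η : ℝ => (1 + s * η) ^ ρ) (𝓝[>] 0) (𝓝 1) := by
  have h : ContinuousAt (fun η : ℝ => (1 + s * η) ^ ρ) 0 :=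
    (Real.continuousAt_rpow_const _ ρ (by simp)).comp (by fun_prop)
  simpa using h.tendsto.mono_left nhdsWithin_le_nhds

theorem stmt_18_general {Ω : Type*} [MeasurableSpace Ω] (μ : Measure Ω) [IsProbabilityMeasure μ]
    (Sstar Xstar Δ : Ω → ℝ)
    (habs : ∀ ω, |Sstar ω - Xstar ω| ≤ Δ ω)
    (ρ : ℝ)
    (hpos : ∀ x : ℝ, 0 < (μ {ω | x < Xstar ω}).toReal)
    (hrv : ∀ y > (0 : ℝ), Tendsto
      (fun x : ℝ => (μ {ω | x * y < Xstar ω}).toReal / (μ {ω | x < Xstar ω}).toReal)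
      atTop (nhds (y ^ ρ)))
    (δ : ℝ → ℝ) (hδ0 : Tendsto δ atTop (nhds 0))
    (hΔ : Tendsto
      (fun x : ℝ => (μ {ω | δ x * x < Δ ω}).toReal / (μ {ω | x < Xstar ω}).toReal)
      atTop (nhds 0)) :
    Tendsto (fun x : ℝ => (μ {ω | x < Sstar ω}).toReal / (μ {ω | x < Xstar ω}).toReal)
      atTop (nhds 1) := by
  simp only [← measureReal_def] at hpos hrv hΔ ⊢
  refine tendsto_of_eventually_between_family
    (tendsto_one_add_mul_rpow_nhdsGT_zero 1 ρ) (tendsto_one_add_mul_rpow_nhdsGT_zero (-1) ρ)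
    (l := fun η x => μ.real {ω | x * (1 + η) < Xstar ω} / μ.real {ω | x < Xstar ω}
      - μ.real {ω | δ x * x < Δ ω} / μ.real {ω | x < Xstar ω})
    (u := fun η x => μ.real {ω | x * (1 - η) < Xstar ω} / μ.real {ω | x < Xstar ω}
      + μ.real {ω | δ x * x < Δ ω} / μ.real {ω | x < Xstar ω}) ?_ ?_ ?_
  · filter_upwards [self_mem_nhdsWithin] with η (hη : 0 < η)
    simpa using (hrv (1 + η) (by linarith)).sub hΔ
  · filter_upwards [Ioo_mem_nhdsGT one_pos] with η ⟨_, hη1⟩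
    simpa [← sub_eq_add_neg] using (hrv (1 - η) (by linarith)).add hΔ
  · filter_upwards [self_mem_nhdsWithin] with η (hη : 0 < η)
    filter_upwards [hδ0.eventually_le_const hη, eventually_ge_atTop 0] with x hδx hx
    obtain ⟨hlower, hupper⟩ := measureReal_tail_sandwich (μ := μ) habs hx hδx
    have hFx := hpos x
    simp only [sub_le_iff_le_add, ← add_div]
    exact ⟨div_le_div_of_nonneg_right hlower hFx.le, div_le_div_of_nonneg_right hupper hFx.le⟩

theorem stmt_18 {Ω : Type*} [MeasurableSpace Ω] (μ : Measure Ω) [IsProbabilityMeasure μ]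
    (Sstar Xstar Δ : Ω → ℝ)
    (hΔnn : ∀ ω, 0 ≤ Δ ω)
    (habs : ∀ ω, |Sstar ω - Xstar ω| ≤ Δ ω)
    (ρ : ℝ) (hρ : ρ < 0)
    (hpos : ∀ x : ℝ, 0 < (μ {ω | x < Xstar ω}).toReal)
    (hrv : ∀ y > (0 : ℝ), Tendsto
      (fun x : ℝ => (μ {ω | x * y < Xstar ω}).toReal / (μ {ω | x < Xstar ω}).toReal)
      atTop (nhds (y ^ ρ)))
    (δ : ℝ → ℝ) (hδpos : ∀ x, 0 < δ x) (hδ0 : Tendsto δ atTop (nhds 0))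
    (hΔ : Tendsto
      (fun x : ℝ => (μ {ω | δ x * x < Δ ω}).toReal / (μ {ω | x < Xstar ω}).toReal)
      atTop (nhds 0)) :
    Tendsto (fun x : ℝ => (μ {ω | x < Sstar ω}).toReal / (μ {ω | x < Xstar ω}).toReal)
      atTop (nhds 1) :=
  stmt_18_general μ Sstar Xstar Δ habs ρ hpos hrv δ hδ0 hΔ
end
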